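/- arXiv:1512.07162 — 2 statements merged into one kernel-verified Lean document; each statement's English description precedes it below -/
import Mathlib

section
/- For attribute subsets P, Q ⊆ C with Q ⊆ P, one has η_P ≥ η_Q (where η_R is computed with respect to the indiscernibility relation IND(R)). -/
/-- The indiscernibility class `[x]_R` of `x` for the attribute subset `R`:
all objects agreeing with `x` on every attribute in `R`. -/
def cls {U V A : Type*} (f : A → U → V) (R : Finset A) (x : U) : Set U :=
  {y | ∀ a ∈ R, f a x = f a y}

/-- Classical lower approximation of `X` with respect to `IND(R)`. -/
def lowerA {U V A : Type*} (f : A → U → V) (R : Finset A) (X : Set U) : Set U :=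
  {x | cls f R x ⊆ X}

/-- Classical upper approximation of `X` with respect to `IND(R)`. -/
def upperA {U V A : Type*} (f : A → U → V) (R : Finset A) (X : Set U) : Set U :=
  {x | (cls f R x ∩ X).Nonempty}

/-- α-probabilistic lower approximation: `{x | |[x]_R ∩ X| ≥ α·|[x]_R|}`. -/
noncomputable def aprLow {U V A : Type*} (f : A → U → V) (R : Finset A) (α : ℝ)
    (X : Set U) : Set U :=
  {x | α * ((cls f R x).ncard : ℝ) ≤ (((cls f R x) ∩ X).ncard : ℝ)}

/-- β-probabilistic upper approximation: `{x | |[x]_R ∩ X| > β·|[x]_R|}`. -/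
noncomputable def aprUp {U V A : Type*} (f : A → U → V) (R : Finset A) (β : ℝ)
    (X : Set U) : Set U :=
  {x | β * ((cls f R x).ncard : ℝ) < (((cls f R x) ∩ X).ncard : ℝ)}

/-- `η_R = (Σ_{i=1}^M |lower_R(apr_C^α(Y_i))|)/(|U|·M)`, the sum running over the
decision classes `Y_i = d⁻¹(v)`, `v ∈ d(U)`. -/
noncomputable def eta {U V A : Type*} [Fintype U] [DecidableEq V] (f : A → U → V)
    (C : Finset A) (d : U → V) (α : ℝ) (R : Finset A) : ℝ :=
  (∑ v ∈ Finset.univ.image d,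
      ((lowerA f R (aprLow f C α (d ⁻¹' {v}))).ncard : ℝ)) /
    ((Fintype.card U : ℝ) * ((Finset.univ.image d).card : ℝ))

/-- `μ_R = (Σ_{i=1}^M |upper_R(Apr_C^β(Y_i))|)/(|U|·M)`, the sum running over the
decision classes `Y_i = d⁻¹(v)`, `v ∈ d(U)`. -/
noncomputable def mu {U V A : Type*} [Fintype U] [DecidableEq V] (f : A → U → V)
    (C : Finset A) (d : U → V) (β : ℝ) (R : Finset A) : ℝ :=
  (∑ v ∈ Finset.univ.image d,
      ((upperA f R (aprUp f C β (d ⁻¹' {v}))).ncard : ℝ)) /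
    ((Fintype.card U : ℝ) * ((Finset.univ.image d).card : ℝ))

theorem eta_monotone_of_subset {U V A : Type*} [Fintype U] [Nonempty U]
    [DecidableEq V] (f : A → U → V) (C : Finset A) (d : U → V)
    (α β : ℝ) (hβ0 : 0 ≤ β) (hβα : β < α) (hα1 : α ≤ 1)
    (P Q : Finset A) (hP : P ⊆ C) (hQ : Q ⊆ C) (hQP : Q ⊆ P) :
    eta f C d α Q ≤ eta f C d α P := by
  unfold eta
  apply div_le_div_of_nonneg_right ?_ ?_
  · apply Finset.sum_le_sum
    intro v _
    have hsub : lowerA f Q (aprLow f C α (d ⁻¹' {v})) ⊆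
        lowerA f P (aprLow f C α (d ⁻¹' {v})) := by
      intro x hx
      exact fun y hy => hx (fun a ha => hy a (hQP ha))
    exact_mod_cast Set.ncard_le_ncard hsub (Set.toFinite _)
  · positivity
end

section
/- For every R ⊆ C: R is an (α,β) lower distribution consistent set (i.e., apr_R^α(Y_i) = apr_C^α(Y_i) for every decision class Y_i) if and only if η_R = η_C. -/
/-- `R` is an (α,β) lower distribution consistent set:
`apr_R^α(Y_i) = apr_C^α(Y_i)` for every decision class `Y_i`. -/
def LowerConsistent {U V A : Type*} [Fintype U] [DecidableEq V] (f : A → U → V)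
    (C : Finset A) (d : U → V) (α : ℝ) (R : Finset A) : Prop :=
  ∀ v ∈ Finset.univ.image d, aprLow f R α (d ⁻¹' {v}) = aprLow f C α (d ⁻¹' {v})

/-- `R` is an (α,β) upper distribution consistent set:
`Apr_R^β(Y_i) = Apr_C^β(Y_i)` for every decision class `Y_i`. -/
def UpperConsistent {U V A : Type*} [Fintype U] [DecidableEq V] (f : A → U → V)
    (C : Finset A) (d : U → V) (β : ℝ) (R : Finset A) : Prop :=
  ∀ v ∈ Finset.univ.image d, aprUp f R β (d ⁻¹' {v}) = aprUp f C β (d ⁻¹' {v})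

/-- `R` is an (α,β) lower distribution reduct: a lower distribution consistent set
no proper subset of which is lower distribution consistent. -/
def LowerReduct {U V A : Type*} [Fintype U] [DecidableEq V] (f : A → U → V)
    (C : Finset A) (d : U → V) (α : ℝ) (R : Finset A) : Prop :=
  LowerConsistent f C d α R ∧ ∀ R' ⊂ R, ¬ LowerConsistent f C d α R'

/-- `R` is an (α,β) upper distribution reduct: an upper distribution consistent set
no proper subset of which is upper distribution consistent. -/
def UpperReduct {U V A : Type*} [Fintype U] [DecidableEq V] (f : A → U → V)
    (C : Finset A) (d : U → V) (β : ℝ) (R : Finset A) : Prop :=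
  UpperConsistent f C d β R ∧ ∀ R' ⊂ R, ¬ UpperConsistent f C d β R'

section aux
variable {U V A : Type*} [Fintype U] {f : A → U → V} {R C : Finset A} {α : ℝ}
open Classical
set_option linter.unusedSectionVars false
set_option linter.unusedVariables false

lemma mem_cls_self (f : A → U → V) (R : Finset A) (x : U) : x ∈ cls f R x :=
  fun _ _ => rfl

lemma cls_eq_of_mem {x y : U} (h : y ∈ cls f R x) : cls f R y = cls f R x := by
  ext z
  constructor
  · intro hz a ha; rw [h a ha]; exact hz a ha
  · intro hz a ha; rw [← h a ha]; exact hz a ha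

lemma mem_cls_symm {x y : U} (h : y ∈ cls f R x) : x ∈ cls f R y := by
  rw [cls_eq_of_mem h]; exact mem_cls_self f R x

lemma cls_anti (hRC : R ⊆ C) (x : U) : cls f C x ⊆ cls f R x :=
  fun y hy a ha => hy a (hRC ha)

lemma aprLow_sat {Y : Set U} {x y : U} (hx : x ∈ aprLow f R α Y)
    (hy : y ∈ cls f R x) : y ∈ aprLow f R α Y := by
  simp only [aprLow, Set.mem_setOf_eq] at *
  rwa [cls_eq_of_mem hy]

lemma lowerA_subset {X : Set U} : lowerA f R X ⊆ X :=
  fun x hx => hx (mem_cls_self f R x)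

lemma lowerA_sat {X : Set U} {x y : U} (hx : x ∈ lowerA f R X)
    (hy : y ∈ cls f R x) : y ∈ lowerA f R X := by
  simp only [lowerA, Set.mem_setOf_eq] at *
  rwa [cls_eq_of_mem hy]

lemma lowerA_eq_of_sat {X : Set U} (h : ∀ x ∈ X, cls f R x ⊆ X) :
    lowerA f R X = X :=
  Set.Subset.antisymm lowerA_subset (fun x hx => h x hx)

lemma ncard_real_eq_sum (T : Set U) :
    ((T.ncard : ℝ)) = ∑ z : U, if z ∈ T then (1:ℝ) else 0 := by
  rw [Finset.sum_boole]
  norm_cast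
  simp [Set.ncard_eq_toFinset_card' T, ← Set.filter_mem_univ_eq_toFinset]

lemma key_sum (f : A → U → V) (C : Finset A) (Y W : Set U)
    (hW : ∀ x ∈ W, cls f C x ⊆ W) :
    ∑ y ∈ (Set.toFinite W).toFinset,
        (((cls f C y) ∩ Y).ncard : ℝ) / ((cls f C y).ncard : ℝ)
      = ((W ∩ Y).ncard : ℝ) := by
  have h1 : ∀ y ∈ (Set.toFinite W).toFinset,
      (((cls f C y) ∩ Y).ncard : ℝ) / ((cls f C y).ncard : ℝ)
        = ∑ z : U, if z ∈ cls f C y ∩ Y then ((cls f C y).ncard : ℝ)⁻¹ else 0 := by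
    intro y _
    rw [div_eq_mul_inv, ncard_real_eq_sum, Finset.sum_mul]
    refine Finset.sum_congr rfl fun z _ => ?_
    by_cases hz : z ∈ cls f C y ∩ Y <;> simp [hz]
  rw [Finset.sum_congr rfl h1, Finset.sum_comm, ncard_real_eq_sum]
  refine Finset.sum_congr rfl fun z _ => ?_
  by_cases hzY : z ∈ Y
  · by_cases hzW : z ∈ W
    · have hfix : ∀ y ∈ (Set.toFinite W).toFinset,
          (if z ∈ cls f C y ∩ Y then ((cls f C y).ncard : ℝ)⁻¹ else 0)
            = if y ∈ cls f C z then ((cls f C z).ncard : ℝ)⁻¹ else 0 := by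
        intro y _
        by_cases hy : y ∈ cls f C z
        · rw [if_pos ⟨mem_cls_symm hy, hzY⟩, if_pos hy, cls_eq_of_mem hy]
        · rw [if_neg, if_neg hy]
          rintro ⟨h2, -⟩
          exact hy (mem_cls_symm h2)
      rw [Finset.sum_congr rfl hfix, if_pos (Set.mem_inter hzW hzY),
        ← Finset.sum_filter]
      have hfilt : (Set.toFinite W).toFinset.filter (· ∈ cls f C z)
          = (Set.toFinite (cls f C z)).toFinset := by
        ext y
        simp only [Finset.mem_filter, Set.Finite.mem_toFinset]
        exact ⟨fun h => h.2, fun h => ⟨hW z hzW h, h⟩⟩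
      rw [hfilt, Finset.sum_const, nsmul_eq_mul]
      have hcard : ((Set.toFinite (cls f C z)).toFinset.card : ℝ)
          = ((cls f C z).ncard : ℝ) := by
        rw [Set.ncard_eq_toFinset_card _ (Set.toFinite _)]
      rw [hcard, mul_inv_cancel₀]
      have hpos : 0 < (cls f C z).ncard :=
        (Set.ncard_pos (Set.toFinite _)).2 ⟨z, mem_cls_self f C z⟩
      exact_mod_cast hpos.ne'
    · rw [if_neg (fun h => hzW h.1)]
      refine Finset.sum_eq_zero fun y hy => ?_
      rw [if_neg]
      rintro ⟨h2, -⟩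
      exact hzW (hW y ((Set.Finite.mem_toFinset _).1 hy) h2)
  · rw [if_neg (fun h => hzY h.2)]
    refine Finset.sum_eq_zero fun y _ => ?_
    rw [if_neg (fun h => hzY h.2)]

lemma avg_le {Y W : Set U} (hW : ∀ x ∈ W, cls f C x ⊆ W)
    (h : ∀ y ∈ W, α * ((cls f C y).ncard : ℝ) ≤ (((cls f C y) ∩ Y).ncard : ℝ)) :
    α * (W.ncard : ℝ) ≤ ((W ∩ Y).ncard : ℝ) := by
  rw [← key_sum f C Y W hW]
  have heq : α * (W.ncard : ℝ) = ∑ _y ∈ (Set.toFinite W).toFinset, α := by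
    rw [Finset.sum_const, nsmul_eq_mul, mul_comm,
      ← Set.ncard_eq_toFinset_card _ (Set.toFinite W)]
  rw [heq]
  refine Finset.sum_le_sum fun y hy => ?_
  have hpos : (0:ℝ) < ((cls f C y).ncard : ℝ) := by
    exact_mod_cast (Set.ncard_pos (Set.toFinite _)).2 ⟨y, mem_cls_self f C y⟩
  rw [le_div_iff₀ hpos]
  exact h y ((Set.Finite.mem_toFinset _).1 hy)

lemma avg_lt {Y W : Set U} (hne : W.Nonempty) (hW : ∀ x ∈ W, cls f C x ⊆ W)
    (h : ∀ y ∈ W, (((cls f C y) ∩ Y).ncard : ℝ) < α * ((cls f C y).ncard : ℝ)) :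
    ((W ∩ Y).ncard : ℝ) < α * (W.ncard : ℝ) := by
  rw [← key_sum f C Y W hW]
  have heq : α * (W.ncard : ℝ) = ∑ _y ∈ (Set.toFinite W).toFinset, α := by
    rw [Finset.sum_const, nsmul_eq_mul, mul_comm,
      ← Set.ncard_eq_toFinset_card _ (Set.toFinite W)]
  rw [heq]
  refine Finset.sum_lt_sum_of_nonempty ((Set.Finite.toFinset_nonempty _).2 hne)
    fun y hy => ?_
  have hpos : (0:ℝ) < ((cls f C y).ncard : ℝ) := by
    exact_mod_cast (Set.ncard_pos (Set.toFinite _)).2 ⟨y, mem_cls_self f C y⟩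
  rw [div_lt_iff₀ hpos]
  exact h y ((Set.Finite.mem_toFinset _).1 hy)

lemma aprLow_eq_of_lowerA_eq (hRC : R ⊆ C) {Y : Set U}
    (h : lowerA f R (aprLow f C α Y) = aprLow f C α Y) :
    aprLow f R α Y = aprLow f C α Y := by
  have hsat : ∀ x ∈ aprLow f C α Y, cls f R x ⊆ aprLow f C α Y := by
    intro x hx y hy
    rw [← h] at hx
    rw [← h]
    exact lowerA_sat hx hy
  have hCsat : ∀ x : U, ∀ y ∈ cls f R x, cls f C y ⊆ cls f R x := by
    intro x y hy
    calc cls f C y ⊆ cls f R y := cls_anti hRC y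
    _ = cls f R x := cls_eq_of_mem hy
  ext x
  constructor
  · intro hx
    by_cases hmem : ∃ y ∈ cls f R x, y ∈ aprLow f C α Y
    · obtain ⟨y, hy, hyA⟩ := hmem
      exact hsat y hyA (mem_cls_symm hy)
    · push_neg at hmem
      exfalso
      have hlt : ((cls f R x ∩ Y).ncard : ℝ) < α * ((cls f R x).ncard : ℝ) :=
        avg_lt ⟨x, mem_cls_self f R x⟩ (hCsat x) fun y hy => by
          have := hmem y hy
          simp only [aprLow, Set.mem_setOf_eq, not_le] at this
          exact this
      have hx' : α * ((cls f R x).ncard : ℝ) ≤ ((cls f R x ∩ Y).ncard : ℝ) := hx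
      linarith
  · intro hx
    have hsub : cls f R x ⊆ aprLow f C α Y := hsat x hx
    exact avg_le (hCsat x) fun y hy => hsub hy

end aux

theorem lowerConsistent_iff_eta_eq {U V A : Type*} [Fintype U] [Nonempty U]
    [DecidableEq V] (f : A → U → V) (C : Finset A) (d : U → V)
    (α β : ℝ) (hβ0 : 0 ≤ β) (hβα : β < α) (hα1 : α ≤ 1)
    (R : Finset A) (hR : R ⊆ C) :
    LowerConsistent f C d α R ↔ eta f C d α R = eta f C d α C := by
  classical
  -- the C-terms: lowerA f C (aprLow f C α Y) = aprLow f C α Y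
  have hCterm : ∀ v : V, lowerA f C (aprLow f C α (d ⁻¹' {v}))
      = aprLow f C α (d ⁻¹' {v}) :=
    fun v => lowerA_eq_of_sat (fun x hx y hy => aprLow_sat hx hy)
  constructor
  · intro hcons
    unfold eta
    congr 1
    refine Finset.sum_congr rfl fun v hv => ?_
    rw [hCterm v, ← hcons v hv]
    exact congrArg (fun s : Set U => ((s.ncard : ℕ) : ℝ)) (lowerA_eq_of_sat (fun x hx y hy => aprLow_sat hx hy))
  · intro heq
    have hD : ((Fintype.card U : ℝ) * ((Finset.univ.image d).card : ℝ)) ≠ 0 := by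
      have h1 : 0 < Fintype.card U := Fintype.card_pos
      have h2 : 0 < (Finset.univ.image d).card := by
        refine Finset.card_pos.2 ?_
        obtain ⟨x⟩ := ‹Nonempty U›
        exact ⟨d x, Finset.mem_image_of_mem d (Finset.mem_univ x)⟩
      positivity
    have hsums : (∑ v ∈ Finset.univ.image d,
          ((lowerA f R (aprLow f C α (d ⁻¹' {v}))).ncard : ℝ))
        = ∑ v ∈ Finset.univ.image d,
          ((lowerA f C (aprLow f C α (d ⁻¹' {v}))).ncard : ℝ) := by
      unfold eta at heq
      field_simp at heq
      exact heq
    have hle : ∀ v ∈ Finset.univ.image d,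
        ((lowerA f R (aprLow f C α (d ⁻¹' {v}))).ncard : ℝ)
          ≤ ((lowerA f C (aprLow f C α (d ⁻¹' {v}))).ncard : ℝ) := by
      intro v _
      rw [hCterm v]
      exact_mod_cast Set.ncard_le_ncard lowerA_subset (Set.toFinite _)
    have hterm := (Finset.sum_eq_sum_iff_of_le hle).1 hsums
    intro v hv
    have h1 : ((lowerA f R (aprLow f C α (d ⁻¹' {v}))).ncard : ℝ)
        = ((aprLow f C α (d ⁻¹' {v})).ncard : ℝ) := by
      rw [hterm v hv, hCterm v]
    have h2 : lowerA f R (aprLow f C α (d ⁻¹' {v})) = aprLow f C α (d ⁻¹' {v}) := by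
      refine Set.eq_of_subset_of_ncard_le lowerA_subset ?_ (Set.toFinite _)
      exact_mod_cast h1.ge
    exact aprLow_eq_of_lowerA_eq hR h2
end
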